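/- For a uniquely decodable binary prefix code with codeword lengths l_1, …, l_m, the Kraft inequality ∑_i 2^{−l_i} ≤ 1 holds; conversely, for any lengths l_1,…,l_m satisfying ∑_i 2^{−l_i} ≤ 1 there exists a binary prefix code with exactly these codeword lengths. -/

import Mathlib

/-!
Fix `n` at least the length of every word involved. Over an alphabet of size `D`, a word `w` with
`|w| ≤ n` is a prefix of exactly `D ^ (n - |w|)` of the `D ^ n` words of length `n`, so its weight
`D⁻¹ ^ |w|` is the proportion of words of length `n` extending it. For a prefix code these sets of
extensions are pairwise disjoint, which gives the inequality. Conversely, place the codewords in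
order of increasing length: while the Kraft sum of the words placed so far is below `1`, their
extensions do not cover all words of the next length, and an uncovered word is incomparable with
every earlier codeword.
-/

open Finset

namespace InformationTheory

variable {α ι : Type*} [Fintype α]

variable (α) in
def wordsOfLength (n : ℕ) : Finset (List α) :=
  (univ : Finset (List.Vector α n)).map ⟨List.Vector.toList, List.Vector.toList_injective⟩

lemma mem_wordsOfLength {n : ℕ} {x : List α} : x ∈ wordsOfLength α n ↔ x.length = n :=
  ⟨fun hx => by obtain ⟨v, -, rfl⟩ := mem_map.1 hx; exact v.length_val,
    fun hx => mem_map.2 ⟨⟨x, hx⟩, mem_univ _, rfl⟩⟩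

lemma card_wordsOfLength (n : ℕ) : #(wordsOfLength α n) = Fintype.card α ^ n := by
  simp [wordsOfLength]

variable [DecidableEq α]

def extensionsOfLength (w : List α) (n : ℕ) : Finset (List α) :=
  {x ∈ wordsOfLength α n | w <+: x}

lemma extensionsOfLength_eq_map {w : List α} {n : ℕ} (hw : w.length ≤ n) :
    extensionsOfLength w n =
      (wordsOfLength α (n - w.length)).map ⟨(w ++ ·), List.append_right_injective w⟩ := by
  ext x
  simp only [extensionsOfLength, mem_filter, mem_wordsOfLength, mem_map,
    Function.Embedding.coeFn_mk]
  constructor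
  · rintro ⟨hx, t, rfl⟩
    exact ⟨t, by simp at hx; omega, rfl⟩
  · rintro ⟨t, ht, rfl⟩
    exact ⟨by simp; omega, t, rfl⟩

lemma disjoint_extensionsOfLength {w v : List α} (hwv : ¬ w <+: v) (hvw : ¬ v <+: w) (n : ℕ) :
    Disjoint (extensionsOfLength w n) (extensionsOfLength v n) :=
  disjoint_left.2 fun _ hw hv =>
    (List.prefix_or_prefix_of_prefix (mem_filter.1 hw).2 (mem_filter.1 hv).2).elim hwv hvw

lemma card_extensionsOfLength {w : List α} {n : ℕ} (hw : w.length ≤ n) :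
    #(extensionsOfLength w n) = Fintype.card α ^ (n - w.length) := by
  rw [extensionsOfLength_eq_map hw, card_map, card_wordsOfLength]

variable [Nonempty α]

lemma inv_card_pow_length_eq {w : List α} {n : ℕ} (hw : w.length ≤ n) :
    (Fintype.card α : ℝ)⁻¹ ^ w.length =
      #(extensionsOfLength w n) / (Fintype.card α : ℝ) ^ n := by
  have hD : (Fintype.card α : ℝ) ≠ 0 := by positivity
  rw [card_extensionsOfLength hw, Nat.cast_pow, pow_sub₀ _ hD hw, inv_pow]
  field_simp

lemma sum_card_extensionsOfLength_div {s : Finset ι} {c : ι → List α} {n : ℕ}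
    (hc : ∀ i ∈ s, (c i).length ≤ n) :
    ∑ i ∈ s, (Fintype.card α : ℝ)⁻¹ ^ (c i).length =
      (∑ i ∈ s, #(extensionsOfLength (c i) n) : ℕ) / (Fintype.card α : ℝ) ^ n := by
  rw [Nat.cast_sum, sum_div]
  exact sum_congr rfl fun i hi => inv_card_pow_length_eq (hc i hi)

theorem sum_inv_card_pow_length_le_one [Fintype ι] {c : ι → List α}
    (hc : Pairwise fun i j => ¬ c i <+: c j) :
    ∑ i, (Fintype.card α : ℝ)⁻¹ ^ (c i).length ≤ 1 := by
  set n := univ.sup fun i => (c i).length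
  have hn : ∀ i ∈ univ, (c i).length ≤ n := fun i hi => le_sup (f := fun i => (c i).length) hi
  have hdisj : ((univ : Finset ι) : Set ι).PairwiseDisjoint fun i => extensionsOfLength (c i) n :=
    fun i _ j _ hij => disjoint_extensionsOfLength (hc hij) (hc hij.symm) n
  have hcount : ∑ i, #(extensionsOfLength (c i) n) ≤ #(wordsOfLength α n) := by
    rw [← card_biUnion hdisj]
    exact card_le_card (biUnion_subset.2 fun i _ => filter_subset _ _)
  rw [sum_card_extensionsOfLength_div hn, div_le_one (by positivity)]
  exact_mod_cast hcount.trans_eq (card_wordsOfLength n)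

lemma exists_length_eq_forall_not_prefix {s : Finset ι} {c : ι → List α} {n : ℕ}
    (hc : ∀ i ∈ s, (c i).length ≤ n) (hs : ∑ i ∈ s, (Fintype.card α : ℝ)⁻¹ ^ (c i).length < 1) :
    ∃ x : List α, x.length = n ∧ ∀ i ∈ s, ¬ c i <+: x := by
  by_contra! hcover
  have hcount : #(wordsOfLength α n) ≤ ∑ i ∈ s, #(extensionsOfLength (c i) n) := by
    refine (card_le_card fun x hx => ?_).trans card_biUnion_le
    obtain ⟨i, hi, hix⟩ := hcover x (mem_wordsOfLength.1 hx)
    exact mem_biUnion.2 ⟨i, hi, mem_filter.2 ⟨hx, hix⟩⟩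
  rw [sum_card_extensionsOfLength_div hc, div_lt_one (by positivity)] at hs
  rw [card_wordsOfLength] at hcount
  exact hs.not_ge (by exact_mod_cast hcount)

theorem exists_pairwise_not_prefix_of_sum_le_one [DecidableEq ι] (L : ι → ℕ) (s : Finset ι)
    (hL : ∑ i ∈ s, (Fintype.card α : ℝ)⁻¹ ^ L i ≤ 1) :
    ∃ c : ι → List α,
      (s : Set ι).Pairwise (fun i j => ¬ c i <+: c j) ∧ ∀ i ∈ s, (c i).length = L i := by
  induction s using Finset.induction_on_max_value L with
  | empty => exact ⟨fun _ => [], by simp, by simp⟩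
  | insert a s ha hmax ih =>
    rw [sum_insert ha] at hL
    have hpos : 0 < (Fintype.card α : ℝ)⁻¹ ^ L a := by positivity
    obtain ⟨c, hc, hlen⟩ := ih (by linarith)
    have hcs : ∀ i ∈ s, (c i).length ≤ L a := fun i hi => (hlen i hi).trans_le (hmax i hi)
    obtain ⟨x, hx, hfree⟩ : ∃ x : List α, x.length = L a ∧ ∀ i ∈ s, ¬ c i <+: x :=
      exists_length_eq_forall_not_prefix hcs <|
        (sum_congr rfl fun i hi => by rw [hlen i hi]).trans_lt (by linarith)
    have hnot_prefix : ∀ i ∈ s, ¬ x <+: c i := fun i hi h =>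
      hfree i hi (h.eq_of_length_le (hx ▸ hcs i hi) ▸ List.prefix_refl _)
    have hupdate : ∀ i ∈ s, Function.update c a x i = c i := fun i hi =>
      Function.update_of_ne (ne_of_mem_of_not_mem hi ha) _ _
    refine ⟨Function.update c a x, ?_, ?_⟩
    · rw [coe_insert, Set.pairwise_insert_of_notMem ha]
      refine ⟨fun i hi j hj hij => ?_, fun i hi => ?_⟩
      · simpa only [hupdate i hi, hupdate j hj] using hc hi hj hij
      · simpa only [hupdate i hi, Function.update_self] using ⟨hnot_prefix i hi, hfree i hi⟩
    · intro i hi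
      rcases mem_insert.1 hi with rfl | hi
      · rw [Function.update_self, hx]
      · rw [hupdate i hi, hlen i hi]

end InformationTheory

open InformationTheory

/-- Kraft's inequality, both directions, for binary prefix codes on `m` symbols.
(a) Every binary prefix code (injective, no codeword a prefix of another) with
codeword lengths `l_i` satisfies `∑ i, 2^{-l_i} ≤ 1`.
(b) Conversely, any lengths satisfying `∑ i, 2^{-l_i} ≤ 1` are realized by some
binary prefix code. -/
theorem kraft_inequality (m : ℕ) :
    (∀ c : Fin m → List Bool, Function.Injective c →
        (∀ i j, i ≠ j → ¬ c i <+: c j) →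
        ∑ i, ((2 : ℝ)⁻¹) ^ (c i).length ≤ 1) ∧
    (∀ L : Fin m → ℕ, ∑ i, ((2 : ℝ)⁻¹) ^ L i ≤ 1 →
        ∃ c : Fin m → List Bool, Function.Injective c ∧
          (∀ i j, i ≠ j → ¬ c i <+: c j) ∧ ∀ i, (c i).length = L i) := by
  refine ⟨fun c _ hc => ?_, fun L hL => ?_⟩
  · simpa using sum_inv_card_pow_length_le_one (α := Bool) hc
  · obtain ⟨c, hc, hlen⟩ := exists_pairwise_not_prefix_of_sum_le_one (α := Bool) L univ
      (by simpa using hL)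
    rw [coe_univ, Set.pairwise_univ] at hc
    refine ⟨c, fun i j hij => ?_, fun i j => @hc i j, fun i => hlen i (mem_univ i)⟩
    by_contra hne
    exact hc hne (hij ▸ List.prefix_refl (c i))
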